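/- arXiv:0806.2362 — 3 statements merged into one kernel-verified Lean document; each statement's English description precedes it below -/
import Mathlib

section
/- Fix an integer g ≥ 1 and a point a⃗ = (a_1, …, a_g) ∈ ℂ^g with τ_g(a⃗) := det X_g(a⃗) ≠ 0. Then there exists a vector b⃗ = (b_0, …, b_{g+1}) ∈ ℂ^{g+2} with X_{g+2}(a⃗)·b⃗ = 0 and b_0 ≠ 0. Consequently, there exists a polynomial h ∈ ℂ[t] with deg h ≤ g+1 and h(0) ≠ 0 such that the coefficient of t^n in exp(Σ_{i=1}^g a_i t^{2i−1})·h(t) vanishes for every odd n with n < 2g+1. -/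
/-- `exp` of a formal power series (with zero constant term), defined coefficientwise:
the coefficient of `t^n` in `∑ₘ s^m / m!`.  (For `s` with zero constant term only the
terms with `m ≤ n` contribute.) -/
noncomputable def expPS (s : PowerSeries ℂ) : PowerSeries ℂ :=
  PowerSeries.mk fun n => ∑ m ∈ Finset.range (n + 1),
    ((m.factorial : ℂ))⁻¹ * PowerSeries.coeff n (s ^ m)

/-- The series `∑_{i=1}^g a_i t^{2i-1}` (with `a : Fin g → ℂ`, `a i = a_{i+1}`). -/
noncomputable def genSer (g : ℕ) (a : Fin g → ℂ) : PowerSeries ℂ :=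
  ∑ i : Fin g, PowerSeries.monomial (2 * (i : ℕ) + 1) (a i)

/-- `χ_n(a)` : the coefficient of `t^n` in `exp(∑_{i=1}^g a_i t^{2i-1})`, with `χ_n = 0`
for `n < 0`. -/
noncomputable def chi (g : ℕ) (a : Fin g → ℂ) (n : ℤ) : ℂ :=
  if 0 ≤ n then PowerSeries.coeff n.toNat (expPS (genSer g a)) else 0

/-- The `g × k` matrix `X_k(a)` whose `(i,j)` entry (1-indexed) is `χ_{2i-j}(a)`. -/
noncomputable def Xmat (g : ℕ) (a : Fin g → ℂ) (k : ℕ) : Matrix (Fin g) (Fin k) ℂ :=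
  Matrix.of fun i j => chi g a (2 * ((i : ℕ) : ℤ) + 1 - ((j : ℕ) : ℤ))

/-- `τ_g(a) = det X_g(a)` where `X_g(a)` is the square `g × g` matrix with
`(i,j)` entry `χ_{2i-j}(a)` (1-indexed). -/
noncomputable def tauNum (g : ℕ) (a : Fin g → ℂ) : ℂ :=
  (Matrix.of fun i j : Fin g =>
    chi g a (2 * ((i : ℕ) : ℤ) + 1 - ((j : ℕ) : ℤ))).det

/-!
Let `Y` be the `(g + 1) × (g + 2)` matrix `(χ_{2i+1-j})`, i.e. `X_{g+2}(a)` with one more row.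
Its vector `b` of signed maximal minors is orthogonal to all rows of `Y` (each entry of `Y b` is
the Laplace expansion of a determinant with a repeated row), so `X_{g+2}(a) b = 0`. Since
`χ_0 = 1` and `χ_n = 0` for `n < 0`, the first row of `Y` with column `0` deleted is `(1, 0, …, 0)`,
and the minor left after deleting also that row and the next column is `X_g(a)`; hence
`b_0 = τ_g(a) ≠ 0`. Finally, for `h = ∑ b_j t^j` and odd `n = 2i + 1 < 2g + 1`, the coefficient
of `t^n` in `exp(∑ a_i t^{2i-1}) h` is `∑_j χ_{n-j} b_j`, the `i`-th entry of `X_{g+2}(a) b`.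
-/

open Polynomial Matrix

namespace Matrix

variable {R : Type*} [CommRing R] {n : ℕ}

def signedMaxMinors (M : Matrix (Fin n) (Fin (n + 1)) R) (j : Fin (n + 1)) : R :=
  (-1) ^ (j : ℕ) * (M.submatrix id j.succAbove).det

theorem mulVec_signedMaxMinors (M : Matrix (Fin n) (Fin (n + 1)) R) :
    M *ᵥ signedMaxMinors M = 0 := by
  funext i
  let N : Matrix (Fin (n + 1)) (Fin (n + 1)) R := of (Fin.cons (M i) M)
  have hN : N.det = 0 := det_zero_of_row_eq (Fin.succ_ne_zero i).symm rfl
  rw [det_succ_row_zero] at hN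
  rw [Pi.zero_apply, ← hN]
  change ∑ j, M i j * signedMaxMinors M j = _
  refine Finset.sum_congr rfl fun j _ => ?_
  rw [signedMaxMinors, mul_left_comm, ← mul_assoc]
  rfl

end Matrix

theorem Polynomial.coeff_powerSeries_mul_sum_C_mul_X_pow {R : Type*} [CommSemiring R] {k : ℕ}
    (f : PowerSeries R) (b : Fin k → R) (n : ℕ) :
    PowerSeries.coeff n (f * ((∑ j : Fin k, C (b j) * X ^ (j : ℕ) : R[X]) : PowerSeries R)) =
      ∑ j : Fin k, (if (j : ℕ) ≤ n then PowerSeries.coeff (n - j) f else 0) * b j := by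
  have hcoe : ((∑ j : Fin k, C (b j) * X ^ (j : ℕ) : R[X]) : PowerSeries R) =
      ∑ j : Fin k, PowerSeries.C (b j) * PowerSeries.X ^ (j : ℕ) := by
    rw [← Polynomial.coeToPowerSeries.ringHom_apply, map_sum]
    simp only [map_mul, map_pow, Polynomial.coeToPowerSeries.ringHom_apply, coe_C, coe_X]
  rw [hcoe, Finset.mul_sum, map_sum]
  refine Finset.sum_congr rfl fun j _ => ?_
  rw [mul_left_comm, PowerSeries.coeff_C_mul, PowerSeries.coeff_mul_X_pow', mul_comm]

theorem Polynomial.coeff_zero_sum_C_mul_X_pow {R : Type*} [Semiring R] {k : ℕ}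
    (b : Fin (k + 1) → R) : (∑ j : Fin (k + 1), C (b j) * X ^ (j : ℕ)).coeff 0 = b 0 := by
  simp [finsetSum_coeff, Fin.sum_univ_succ]

section Chi

variable (g : ℕ) (a : Fin g → ℂ)

theorem chi_zero : chi g a 0 = 1 := by
  simp [chi, expPS]

theorem chi_of_neg {z : ℤ} (hz : z < 0) : chi g a z = 0 := by
  simp [chi, not_le.mpr hz]

theorem chi_natCast_sub (n q : ℕ) :
    chi g a (n - q) = if q ≤ n then PowerSeries.coeff (n - q) (expPS (genSer g a)) else 0 := by
  split_ifs with h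
  · rw [chi, if_pos (by omega)]
    congr
    omega
  · exact chi_of_neg g a (by omega)

/-- The matrix `(χ_{2i-j})` with `m` rows and `k` columns (indices from `1`), so that
`Xmat g a k = chiMat g a g k` and `tauNum g a = (chiMat g a g g).det` hold by `rfl`. -/
noncomputable def chiMat (m k : ℕ) : Matrix (Fin m) (Fin k) ℂ :=
  Matrix.of fun i j => chi g a (2 * ((i : ℕ) : ℤ) + 1 - ((j : ℕ) : ℤ))

theorem det_chiMat_submatrix_succAbove_zero (m : ℕ) :
    ((chiMat g a (m + 1) (m + 2)).submatrix id (Fin.succAbove 0)).det =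
      (chiMat g a m m).det := by
  rw [det_succ_row_zero, Fin.sum_univ_succ, Finset.sum_eq_zero]
  · have hcorner : chiMat g a (m + 1) (m + 2) 0 (Fin.succAbove 0 0) = 1 := by
      simp [chiMat, chi_zero]
    have hminor : ((chiMat g a (m + 1) (m + 2)).submatrix id (Fin.succAbove 0)).submatrix
        Fin.succ (Fin.succAbove 0) = chiMat g a m m := by
      ext i j
      simp only [chiMat, submatrix_apply, of_apply, id_eq, Fin.succAbove_zero, Fin.val_succ]
      congr 1
      push_cast
      ring
    rw [submatrix_apply, id_eq, hcorner, hminor, Fin.val_zero, pow_zero, one_mul, one_mul, add_zero]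
  · intro j _
    refine mul_eq_zero_of_left (mul_eq_zero_of_right _ ?_) _
    simp only [chiMat, submatrix_apply, of_apply, id_eq, Fin.succAbove_zero]
    exact chi_of_neg g a (by simp; omega)

theorem signedMaxMinors_chiMat_zero (m : ℕ) :
    signedMaxMinors (chiMat g a (m + 1) (m + 2)) 0 = (chiMat g a m m).det := by
  rw [signedMaxMinors, Fin.val_zero, pow_zero, one_mul, det_chiMat_submatrix_succAbove_zero]

theorem chiMat_mulVec_signedMaxMinors (m : ℕ) :
    chiMat g a m (m + 2) *ᵥ signedMaxMinors (chiMat g a (m + 1) (m + 2)) = 0 := by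
  funext i
  exact congr_fun (mulVec_signedMaxMinors (chiMat g a (m + 1) (m + 2))) i.castSucc

theorem coeff_expPS_mul_eq_zero_of_Xmat_mulVec_eq_zero {k : ℕ} {b : Fin k → ℂ}
    (hb : Xmat g a k *ᵥ b = 0) {n : ℕ} (hn : Odd n) (hng : n < 2 * g + 1) :
    PowerSeries.coeff n (expPS (genSer g a) * ((∑ j : Fin k, C (b j) * X ^ (j : ℕ) : ℂ[X]) :
      PowerSeries ℂ)) = 0 := by
  obtain ⟨i, rfl⟩ := hn
  have hi := congr_fun hb ⟨i, by omega⟩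
  rw [coeff_powerSeries_mul_sum_C_mul_X_pow]
  refine (Finset.sum_congr rfl fun j _ => ?_).trans hi
  rw [← chi_natCast_sub]
  push_cast
  rfl

end Chi

theorem stmt_3_general (g : ℕ) (a : Fin g → ℂ) (hτ : tauNum g a ≠ 0) :
    (∃ b : Fin (g + 2) → ℂ, (Xmat g a (g + 2)).mulVec b = 0 ∧ b 0 ≠ 0) ∧
      (∃ h : Polynomial ℂ, h.degree ≤ ((g + 1 : ℕ) : WithBot ℕ) ∧ h.coeff 0 ≠ 0 ∧
        ∀ n : ℕ, Odd n → n < 2 * g + 1 →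
          PowerSeries.coeff n (expPS (genSer g a) * (h : PowerSeries ℂ)) = 0) := by
  obtain ⟨b, hb, hb0⟩ : ∃ b, Xmat g a (g + 2) *ᵥ b = 0 ∧ b 0 ≠ 0 :=
    ⟨_, chiMat_mulVec_signedMaxMinors g a g, by rwa [signedMaxMinors_chiMat_zero]⟩
  refine ⟨⟨b, hb, hb0⟩, ∑ j, C (b j) * X ^ (j : ℕ), ?_, ?_, fun n hn hng =>
    coeff_expPS_mul_eq_zero_of_Xmat_mulVec_eq_zero g a hb hn hng⟩
  · exact Order.le_of_lt_succ (degree_sum_fin_lt b)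
  · rwa [coeff_zero_sum_C_mul_X_pow]

theorem stmt_3 (g : ℕ) (hg : 1 ≤ g) (a : Fin g → ℂ) (hτ : tauNum g a ≠ 0) :
    (∃ b : Fin (g + 2) → ℂ, (Xmat g a (g + 2)).mulVec b = 0 ∧ b 0 ≠ 0) ∧
      (∃ h : Polynomial ℂ, h.degree ≤ ((g + 1 : ℕ) : WithBot ℕ) ∧ h.coeff 0 ≠ 0 ∧
        ∀ n : ℕ, Odd n → n < 2 * g + 1 →
          PowerSeries.coeff n (expPS (genSer g a) * (h : PowerSeries ℂ)) = 0) :=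
  stmt_3_general g a hτ
end

section
/- Fix an integer g ≥ 1. The formal power series Ξ_g(t) := (1 − t)·exp(Σ_{j=1}^{g} t^{2j−1}/(2j−1)) ∈ ℂ[[t]] has vanishing coefficient of t^n for every odd n with n < 2g+1 (i.e., for n = 1, 3, …, 2g−1). -/
/-- The polynomial `∑_{j=1}^g t^{2j-1}/(2j-1)`, as a power series. -/
noncomputable def oddLogSerTrunc (g : ℕ) : PowerSeries ℂ :=
  ∑ j : Fin g, PowerSeries.monomial (2 * (j : ℕ) + 1) ((2 * (j : ℕ) + 1 : ℂ))⁻¹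

/-! Write `F = (1 - t) exp S` with `S = ∑_{j<g} t^{2j+1}/(2j+1)`. Since `(1 - t²) S' = 1 - t^{2g}`,
`F` satisfies `(1 - t²) F' = -(t + t^{2g}) F`. Comparing the coefficients of `t^m` for `m < 2g`
gives `f₁ = 0` and `(m + 3) f_{m+3} = m f_{m+1}`, so `f₁ = f₃ = ⋯ = f_{2g-1} = 0`. -/

open PowerSeries

namespace PowerSeries

variable {R : Type*}

theorem coeff_pow_eq_zero_of_lt [CommSemiring R] {s : R⟦X⟧} (hs : constantCoeff s = 0)
    {n m : ℕ} (h : n < m) : coeff n (s ^ m) = 0 :=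
  X_pow_dvd_iff.mp (pow_dvd_pow_of_dvd (X_dvd_iff.mpr hs) m) n h

theorem derivative_monomial_succ [CommSemiring R] (n : ℕ) (a : R) :
    d⁄dX R (monomial (n + 1) a) = monomial n ((n + 1) * a) := by
  ext m
  rw [coeff_derivative, coeff_monomial, coeff_monomial]
  by_cases h : m = n
  · subst h; simp [mul_comm]
  · rw [if_neg (by omega), if_neg h, zero_mul]

section ODE

variable [CommRing R] {F : R⟦X⟧} {N : ℕ}

theorem coeff_one_eq_zero_of_ode (hN : 0 < N)
    (hF : (1 - X ^ 2) * d⁄dX R F = -((X + X ^ N) * F)) : coeff 1 F = 0 := by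
  have h := congrArg (coeff 0) hF
  simp only [sub_mul, one_mul, add_mul, map_sub, map_neg, map_add, coeff_X_pow_mul',
    coeff_derivative] at h
  simpa [hN.ne'] using h

theorem coeff_add_three_of_ode (hF : (1 - X ^ 2) * d⁄dX R F = -((X + X ^ N) * F))
    {m : ℕ} (hm : m + 2 < N) : (m + 3 : R) * coeff (m + 3) F = m * coeff (m + 1) F := by
  have h := congrArg (coeff (m + 2)) hF
  simp only [sub_mul, one_mul, add_mul, map_sub, map_add, map_neg, coeff_derivative,
    coeff_X_pow_mul', coeff_succ_X_mul, not_le.mpr hm, le_add_iff_nonneg_left, zero_le,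
    ↓reduceIte, add_tsub_cancel_right, Nat.cast_add, Nat.cast_ofNat] at h
  linear_combination h

theorem coeff_odd_eq_zero_of_ode [NoZeroDivisors R] [CharZero R]
    (hF : (1 - X ^ 2) * d⁄dX R F = -((X + X ^ N) * F))
    {n : ℕ} (hn : Odd n) (hnN : n ≤ N) : coeff n F = 0 := by
  obtain ⟨k, rfl⟩ := hn
  induction k with
  | zero => exact coeff_one_eq_zero_of_ode (by omega) hF
  | succ k ih =>
    have h := coeff_add_three_of_ode hF (m := 2 * k) (by omega)
    rw [ih (by omega), mul_zero] at h
    exact (mul_eq_zero.mp h).resolve_left (by exact_mod_cast (by omega : 2 * k + 3 ≠ 0))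

end ODE

end PowerSeries

theorem expPS_eq_subst_exp {s : ℂ⟦X⟧} (hs : constantCoeff s = 0) :
    expPS s = (exp ℂ).subst s := by
  ext n
  rw [expPS, coeff_mk, coeff_subst' (HasSubst.of_constantCoeff_zero' hs),
    finsum_eq_sum_of_support_subset _ (s := Finset.range (n + 1)) ?_]
  · refine Finset.sum_congr rfl fun m _ => ?_
    simp [coeff_exp]
  · intro m hm
    rw [Function.mem_support] at hm
    simp only [Finset.coe_range, Set.mem_Iio]
    by_contra h
    exact hm (by rw [coeff_pow_eq_zero_of_lt hs (by omega), smul_zero])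

theorem derivative_expPS {s : ℂ⟦X⟧} (hs : constantCoeff s = 0) :
    d⁄dX ℂ (expPS s) = d⁄dX ℂ s * expPS s := by
  rw [expPS_eq_subst_exp hs, derivative_subst (HasSubst.of_constantCoeff_zero' hs),
    derivative_exp, mul_comm]

theorem constantCoeff_oddLogSerTrunc (g : ℕ) : constantCoeff (oddLogSerTrunc g) = 0 := by
  simp [oddLogSerTrunc, ← coeff_zero_eq_constantCoeff_apply, coeff_monomial]

theorem derivative_oddLogSerTrunc (g : ℕ) :
    d⁄dX ℂ (oddLogSerTrunc g) = ∑ j ∈ Finset.range g, (X ^ 2 : ℂ⟦X⟧) ^ j := by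
  rw [oddLogSerTrunc, map_sum, ← Fin.sum_univ_eq_sum_range]
  refine Finset.sum_congr rfl fun j _ => ?_
  rw [derivative_monomial_succ, ← pow_mul, X_pow_eq]
  push_cast
  rw [mul_inv_cancel₀ (by norm_cast)]

theorem one_sub_X_sq_mul_derivative_oddLogSerTrunc (g : ℕ) :
    (1 - X ^ 2) * d⁄dX ℂ (oddLogSerTrunc g) = 1 - X ^ (2 * g) := by
  rw [derivative_oddLogSerTrunc, mul_neg_geom_sum, pow_mul]

theorem ode_one_sub_X_mul_expPS {s : ℂ⟦X⟧} (hs : constantCoeff s = 0) {N : ℕ}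
    (hs' : (1 - X ^ 2) * d⁄dX ℂ s = 1 - X ^ N) :
    (1 - X ^ 2) * d⁄dX ℂ ((1 - X) * expPS s) = -((X + X ^ N) * ((1 - X) * expPS s)) := by
  rw [Derivation.leibniz, derivative_expPS hs, smul_eq_mul, smul_eq_mul, map_sub,
    derivative_X, Derivation.map_one_eq_zero]
  linear_combination (1 - X) * expPS s * hs'

theorem stmt_5_general (g : ℕ) :
    ∀ n : ℕ, Odd n → n < 2 * g + 1 →
      PowerSeries.coeff n ((1 - PowerSeries.X) * expPS (oddLogSerTrunc g)) = 0 :=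
  fun _ hn hng => coeff_odd_eq_zero_of_ode (ode_one_sub_X_mul_expPS
    (constantCoeff_oddLogSerTrunc g) (one_sub_X_sq_mul_derivative_oddLogSerTrunc g)) hn
    (by omega)

theorem stmt_5 (g : ℕ) (hg : 1 ≤ g) :
    ∀ n : ℕ, Odd n → n < 2 * g + 1 →
      PowerSeries.coeff n ((1 - PowerSeries.X) * expPS (oddLogSerTrunc g)) = 0 :=
  stmt_5_general g
end

section
/- Fix an integer g ≥ 2 and let R := ℂ[X_0, …, X_{2g−1}], with the convention X_m := 0 in R for m < 0. Define g × g matrices Q_1, Q_2 over R by: Q_1(1,j) := X_{g−2j} and Q_1(i,j) := X_{g+i+1−2j} for 2 ≤ i ≤ g; Q_2(1,j) := X_{g+1−2j}, Q_2(2,j) := X_{g+2−2j}, and Q_2(i,j) := X_{g+i+1−2j} for 3 ≤ i ≤ g (in all cases 1 ≤ j ≤ g). Then det Q_1 = det Q_2 in R. -/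
/-- The variable `X_m` of `ℂ[X_0, …, X_{2g-1}]`, with convention `X_m = 0` for `m < 0`
(all the indices appearing below lie in `(-∞, 2g-1]`). -/
noncomputable def Xvar (g : ℕ) (m : ℤ) : MvPolynomial (Fin (2 * g)) ℂ :=
  if h : 0 ≤ m ∧ m < 2 * (g : ℤ) then MvPolynomial.X ⟨m.toNat, by omega⟩ else 0

/-- The matrix `Q_1`: first row `X_{g-2j}`, and `(i,j)` entry `X_{g+i+1-2j}` for
`2 ≤ i ≤ g` (1-indexed). -/
noncomputable def Q1 (g : ℕ) : Matrix (Fin g) (Fin g) (MvPolynomial (Fin (2 * g)) ℂ) :=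
  Matrix.of fun i j =>
    if (i : ℕ) = 0 then Xvar g ((g : ℤ) - 2 * ((j : ℕ) : ℤ) - 2)
    else Xvar g ((g : ℤ) + ((i : ℕ) : ℤ) - 2 * ((j : ℕ) : ℤ))

/-- The matrix `Q_2`: first row `X_{g+1-2j}`, second row `X_{g+2-2j}`, and `(i,j)` entry
`X_{g+i+1-2j}` for `3 ≤ i ≤ g` (1-indexed). -/
noncomputable def Q2 (g : ℕ) : Matrix (Fin g) (Fin g) (MvPolynomial (Fin (2 * g)) ℂ) :=
  Matrix.of fun i j =>
    if (i : ℕ) = 0 then Xvar g ((g : ℤ) - 1 - 2 * ((j : ℕ) : ℤ))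
    else if (i : ℕ) = 1 then Xvar g ((g : ℤ) - 2 * ((j : ℕ) : ℤ))
    else Xvar g ((g : ℤ) + ((i : ℕ) : ℤ) - 2 * ((j : ℕ) : ℤ))

/-!
Let `f = ∑ X_m T^m` and let `A` be the `(g+2) × g` matrix whose row `k` lists the odd
coefficients of `T^1, T^3, …, T^(2g-1)` in `f T^k`. Up to the order of rows and columns, `Q1`
and `Q2` are the maximal minors of `A` that omit the rows `{g-1, g}` and `{g-2, g+1}`.

Complete `A` by two unit columns to a square matrix `N` with `det N ≠ 0` (a specialisation of
the variables turns the relevant minor into a permutation matrix). The two rows of `adj N`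
belonging to the new columns are coefficient vectors of polynomials `C₁, C₂` of degree
`≤ g+1` such that `f C₁` and `f C₂` are even modulo `T^(2g+1)`. As `f(0) = X_0` is not a zero
divisor, `C₁(T) C₂(-T) - C₁(-T) C₂(T)` is then divisible by `T^(2g+1)`, and its coefficient of
`T^(2g-1)` says that the `2 × 2` minors of these two rows of `adj N` in the columns `{g-1, g}`
and `{g-2, g+1}` agree. By Jacobi's complementary minor theorem these minors are `det N` times
`det Q1` and `det Q2`, with the same sign.
-/

open Polynomial Matrix

section OddPart
variable {R : Type*} [CommRing R]

theorem Polynomial.coeff_comp_neg_X (p : R[X]) (n : ℕ) :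
    (p.comp (-X)).coeff n = (-1) ^ n * p.coeff n := by
  simpa [mul_comm] using comp_C_mul_X_coeff (p := p) (r := -1) (n := n)

theorem Polynomial.X_pow_dvd_sub_comp_neg_X {p : R[X]} {n : ℕ}
    (h : ∀ l < n, p.coeff (2 * l + 1) = 0) : X ^ (2 * n + 1) ∣ p - p.comp (-X) := by
  refine X_pow_dvd_iff.mpr fun d hd => ?_
  rw [coeff_sub, coeff_comp_neg_X]
  rcases Nat.even_or_odd' d with ⟨l, rfl | rfl⟩
  · simp [pow_mul]
  · rw [h l (by omega)]; ring

theorem Polynomial.X_pow_dvd_mul_comp_neg_X_sub [IsDomain R] {f p q : R[X]} {k : ℕ}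
    (hf : f.coeff 0 ≠ 0) (hp : X ^ k ∣ f * p - (f * p).comp (-X))
    (hq : X ^ k ∣ f * q - (f * q).comp (-X)) :
    X ^ k ∣ p * q.comp (-X) - p.comp (-X) * q := by
  have key : f * (p * q.comp (-X) - p.comp (-X) * q) =
      q.comp (-X) * (f * p - (f * p).comp (-X)) - p.comp (-X) * (f * q - (f * q).comp (-X)) := by
    simp only [mul_comp]; ring
  refine prime_X.pow_dvd_of_dvd_mul_left k (by rwa [X_dvd_iff]) ?_
  rw [key]
  exact dvd_sub (dvd_mul_of_dvd_right hp _) (dvd_mul_of_dvd_right hq _)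

theorem Polynomial.coeff_mul_comp_neg_X_sub (p q : R[X]) (m : ℕ) (hp : p.natDegree ≤ m + 3)
    (hq : q.natDegree ≤ m + 3) :
    (p * q.comp (-X) - p.comp (-X) * q).coeff (2 * m + 3) =
      2 * (-1) ^ m * (p.coeff (m + 1) * q.coeff (m + 2) - p.coeff (m + 2) * q.coeff (m + 1)
        - (p.coeff m * q.coeff (m + 3) - p.coeff (m + 3) * q.coeff m)) := by
  set F : ℕ → R := fun k =>
    ((-1) ^ (2 * m + 3 - k) - (-1) ^ k) * p.coeff k * q.coeff (2 * m + 3 - k)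
  have hF : ∀ k, k < m ∨ m + 4 ≤ k → F k = 0 := by
    rintro k (hk | hk)
    · simp [F, coeff_eq_zero_of_natDegree_lt (p := q) (show q.natDegree < 2 * m + 3 - k by omega)]
    · simp [F, coeff_eq_zero_of_natDegree_lt (p := p) (show p.natDegree < k by omega)]
  calc _ = ∑ k ∈ Finset.range (m + (4 + m)), F k := by
        rw [coeff_sub, coeff_mul, coeff_mul, ← Finset.sum_sub_distrib,
          Finset.Nat.sum_antidiagonal_eq_sum_range_succ_mk,
          show (2 * m + 3).succ = m + (4 + m) by omega]
        refine Finset.sum_congr rfl fun k _ => ?_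
        simp only [F, coeff_comp_neg_X]; ring
    _ = ∑ k ∈ Finset.range 4, F (m + k) := by
        rw [Finset.sum_range_add, Finset.sum_range_add,
          Finset.sum_eq_zero fun k hk => hF k (.inl (Finset.mem_range.mp hk)),
          Finset.sum_eq_zero fun k _ => hF (m + (4 + k)) (.inr (by omega)), zero_add, add_zero]
    _ = _ := by
        simp only [Finset.sum_range_succ, Finset.sum_range_zero, F, add_zero,
          show 2 * m + 3 - m = m + 3 by omega, show 2 * m + 3 - (m + 1) = m + 2 by omega,
          show 2 * m + 3 - (m + 2) = m + 1 by omega, show 2 * m + 3 - (m + 3) = m by omega]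
        ring

end OddPart

section BlockMinors
variable {m o R : Type*} [Fintype m] [Fintype o] [DecidableEq m] [DecidableEq o] [CommRing R]

theorem Matrix.det_fromCols_one_submatrix (A : Matrix (m ⊕ o) m R) (σ : Equiv.Perm (m ⊕ o)) :
    (fromCols A ((1 : Matrix (m ⊕ o) (m ⊕ o) R).submatrix id (σ ∘ Sum.inr))).det =
      Equiv.Perm.sign σ * (A.submatrix (σ ∘ Sum.inl) id).det := by
  have hblocks :
      (fromCols A ((1 : Matrix (m ⊕ o) (m ⊕ o) R).submatrix id (σ ∘ Sum.inr))).submatrix σ id =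
        fromBlocks (A.submatrix (σ ∘ Sum.inl) id) 0 (A.submatrix (σ ∘ Sum.inr) id) 1 := by
    ext (i | i) (j | j) <;> simp [one_apply]
  have h := det_permute σ
    (fromCols A ((1 : Matrix (m ⊕ o) (m ⊕ o) R).submatrix id (σ ∘ Sum.inr)))
  rw [hblocks, det_fromBlocks_zero₁₂, det_one, mul_one] at h
  rw [h, ← mul_assoc, ← Int.cast_mul, Int.units_coe_mul_self, Int.cast_one, one_mul]

/-- Jacobi's complementary minor theorem, for the minors of `adj M` in the rows `Sum.inr`. -/
theorem Matrix.det_mul_det_submatrix_adjugate (M : Matrix (m ⊕ o) (m ⊕ o) R) (i : o → m ⊕ o) :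
    M.det * (M.adjugate.submatrix Sum.inr i).det =
      (fromCols M.toCols₁ ((1 : Matrix (m ⊕ o) (m ⊕ o) R).submatrix id i)).det *
        M.det ^ Fintype.card o := by
  have hM : M * fromBlocks 1 (M.adjugate.submatrix Sum.inl i) 0 (M.adjugate.submatrix Sum.inr i) =
      fromCols M.toCols₁ ((1 : Matrix (m ⊕ o) (m ⊕ o) R).submatrix id i) *
        fromBlocks 1 0 0 (M.det • 1) := by
    conv_lhs => rw [← fromCols_toCols M]
    rw [fromCols_mul_fromBlocks, fromCols_mul_fromBlocks]
    congr 1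
    · simp
    · ext k t
      have hadj := congrFun (congrFun (mul_adjugate M) k) (i t)
      simp only [mul_apply, Fintype.sum_sum_type] at hadj
      simpa [mul_apply, one_apply] using hadj
  have := congrArg det hM
  rwa [det_mul, det_mul, det_fromBlocks_zero₂₁, det_fromBlocks_zero₂₁, det_one, one_mul, one_mul,
    det_smul, det_one, mul_one] at this

end BlockMinors

namespace OddCoeffMinors

theorem Xvar_of_neg {g : ℕ} {m : ℤ} (h : m < 0) : Xvar g m = 0 := by
  rw [Xvar, dif_neg]; omega

theorem Xvar_of_le {g : ℕ} {m : ℤ} (h : 2 * (g : ℤ) ≤ m) : Xvar g m = 0 := by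
  rw [Xvar, dif_neg]; omega

/-- `2 * (g / 2) + 1` is whichever of `g`, `g + 1` is odd. -/
def specialization (g : ℕ) : Fin (2 * g) → ℂ :=
  fun m => if (m : ℕ) = 0 ∨ (m : ℕ) = 2 * (g / 2) + 1 then 1 else 0

theorem eval_specialization_Xvar {g : ℕ} (hg : 0 < g) (m : ℤ) :
    MvPolynomial.eval (specialization g) (Xvar g m) =
      if m = 0 ∨ m = 2 * (g / 2 : ℕ) + 1 then 1 else 0 := by
  by_cases h : 0 ≤ m ∧ m < 2 * (g : ℤ)
  · rw [Xvar, dif_pos h, MvPolynomial.eval_X]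
    exact if_congr (by dsimp only; omega) rfl rfl
  · rw [Xvar, dif_neg h, map_zero, if_neg (by omega)]

noncomputable def doublingPerm (g : ℕ) : Equiv.Perm (Fin g) :=
  Equiv.ofBijective
    (fun j => ⟨if g ≤ 2 * j then 2 * j - g else 2 * j + 2 * (g / 2) + 1 - g,
      by split_ifs <;> omega⟩)
    (Finite.injective_iff_bijective.mp fun j j' h => by
      simp only [Fin.mk.injEq] at h
      ext
      split_ifs at h <;> omega)

theorem det_Xvar_shift_ne_zero (g : ℕ) :
    (of fun i j : Fin g => Xvar g (g + i - 2 * j)).det ≠ 0 := by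
  intro h
  have hperm : (MvPolynomial.eval (specialization g)).mapMatrix
      (of fun i j : Fin g => Xvar g (g + i - 2 * j)) =
        (1 : Matrix (Fin g) (Fin g) ℂ).submatrix id (doublingPerm g) := by
    ext i j
    simp only [RingHom.mapMatrix_apply, map_apply, of_apply, eval_specialization_Xvar i.pos,
      submatrix_apply, id_eq, one_apply, doublingPerm, Equiv.ofBijective_apply, Fin.ext_iff]
    have := j.isLt
    congr 1
    apply propext
    split_ifs <;> omega
  have := congrArg (MvPolynomial.eval (specialization g)) h
  rw [RingHom.map_det, map_zero, hperm, det_permute', det_one, mul_one] at this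
  simp at this

noncomputable def genericPoly (g : ℕ) : (MvPolynomial (Fin (2 * g)) ℂ)[X] :=
  ∑ m ∈ Finset.range (2 * g), C (Xvar g m) * X ^ m

theorem coeff_genericPoly (g k : ℕ) : (genericPoly g).coeff k = Xvar g k := by
  simp only [genericPoly, finsetSum_coeff, coeff_C_mul_X_pow, Finset.sum_ite_eq,
    Finset.mem_range]
  split_ifs with h
  · rfl
  · exact (Xvar_of_le (by omega)).symm

theorem coeff_genericPoly_mul_X_pow (g d k : ℕ) :
    (genericPoly g * X ^ d).coeff k = Xvar g ((k : ℤ) - d) := by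
  rw [coeff_mul_X_pow']
  split_ifs with h
  · rw [coeff_genericPoly]; congr 1; omega
  · exact (Xvar_of_neg (by omega)).symm

theorem coeff_zero_genericPoly_ne_zero {g : ℕ} (hg : 0 < g) : (genericPoly g).coeff 0 ≠ 0 := by
  rw [coeff_genericPoly, Xvar, dif_pos (by omega)]
  exact MvPolynomial.X_ne_zero _

variable (n : ℕ)

/-- With `g = n + 2`, row `k` stands for `T ^ rowDeg n k`; the rows `Sum.inl i` are those of
`Q1 g`, and `Sum.inr 0`, `Sum.inr 1` are `T^(g-1)`, `T^g`. -/
def rowDeg : Fin (n + 2) ⊕ Fin 2 → ℕ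
  | .inl i => if i = 0 then n + 3 else n + 1 - i
  | .inr t => n + 1 + t

theorem rowDeg_injective : Function.Injective (rowDeg n) := by
  rintro (i | t) (i' | t') h <;> simp only [rowDeg] at h <;> (try split_ifs at h) <;>
    simp only [Fin.ext_iff, Fin.val_zero, Sum.inl.injEq, Sum.inr.injEq, reduceCtorEq] at * <;>
    omega

theorem rowDeg_le (k : Fin (n + 2) ⊕ Fin 2) : rowDeg n k ≤ n + 3 := by
  rcases k with i | t <;> simp only [rowDeg] <;> (try split_ifs) <;> omega

noncomputable def oddCoeffMatrix :
    Matrix (Fin (n + 2) ⊕ Fin 2) (Fin (n + 2)) (MvPolynomial (Fin (2 * (n + 2))) ℂ) :=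
  of fun k j => Xvar (n + 2) (2 * n + 3 - 2 * j - rowDeg n k)

theorem oddCoeffMatrix_apply (k : Fin (n + 2) ⊕ Fin 2) (j : Fin (n + 2)) :
    oddCoeffMatrix n k j =
      (genericPoly (n + 2) * X ^ rowDeg n k).coeff (2 * (n + 1 - j) + 1) := by
  rw [coeff_genericPoly_mul_X_pow, oddCoeffMatrix, of_apply]
  congr 1
  omega

theorem oddCoeffMatrix_submatrix_inl :
    (oddCoeffMatrix n).submatrix Sum.inl id = Q1 (n + 2) := by
  ext i j : 1
  simp only [oddCoeffMatrix, Q1, rowDeg, submatrix_apply, id_eq, of_apply, Fin.ext_iff,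
    Fin.val_zero]
  split_ifs <;> congr 1 <;> omega

def permQ2 : Equiv.Perm (Fin (n + 2) ⊕ Fin 2) :=
  Equiv.swap (.inl 0) (.inr 1) * Equiv.swap (.inl 1) (.inr 0)

theorem sign_permQ2 : Equiv.Perm.sign (permQ2 n) = 1 := by
  simp [permQ2]

theorem oddCoeffMatrix_submatrix_permQ2 :
    (oddCoeffMatrix n).submatrix (permQ2 n ∘ Sum.inl) id = Q2 (n + 2) := by
  ext i j : 1
  have hrow : rowDeg n (permQ2 n (.inl i)) =
      if (i : ℕ) = 0 then n + 2 else if (i : ℕ) = 1 then n + 1 else n + 1 - i := by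
    rcases i with ⟨_ | _ | i, hi⟩ <;>
      simp [permQ2, rowDeg, Equiv.swap_apply_def, Fin.ext_iff]
  simp only [submatrix_apply, Function.comp_apply, id_eq, oddCoeffMatrix, Q2, of_apply, hrow]
  split_ifs <;> congr 1 <;> omega

/-- The unit columns sit in the rows `T^(g+1)` and `T^g`, so that the complementary minor is the
matrix of `det_Xvar_shift_ne_zero`. -/
noncomputable def extendedMatrix :
    Matrix (Fin (n + 2) ⊕ Fin 2) (Fin (n + 2) ⊕ Fin 2) (MvPolynomial (Fin (2 * (n + 2))) ℂ) :=
  fromCols (oddCoeffMatrix n) ((1 : Matrix (Fin (n + 2) ⊕ Fin 2) (Fin (n + 2) ⊕ Fin 2) _).submatrix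
    id (Equiv.swap (.inl 0) (.inr 0) ∘ Sum.inr))

theorem det_extendedMatrix_ne_zero : (extendedMatrix n).det ≠ 0 := by
  have hP : (oddCoeffMatrix n).submatrix (Equiv.swap (.inl 0) (.inr 0) ∘ Sum.inl) id =
      of fun i j : Fin (n + 2) => Xvar (n + 2) ((n + 2 : ℕ) + i - 2 * j) := by
    ext i j : 1
    have hrow : rowDeg n (Equiv.swap (.inl 0) (.inr 0) (.inl i)) = n + 1 - i := by
      rw [Equiv.swap_apply_def]
      split_ifs <;> simp_all [rowDeg]
    simp only [oddCoeffMatrix, submatrix_apply, Function.comp_apply, id_eq, of_apply, hrow]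
    congr 1
    omega
  rw [extendedMatrix, det_fromCols_one_submatrix, hP]
  exact mul_ne_zero (by simp) (det_Xvar_shift_ne_zero _)

noncomputable def kernelPoly (s : Fin 2) : (MvPolynomial (Fin (2 * (n + 2))) ℂ)[X] :=
  ∑ k, C ((extendedMatrix n).adjugate (.inr s) k) * X ^ rowDeg n k

theorem coeff_genericPoly_mul_kernelPoly_odd (s : Fin 2) {l : ℕ} (hl : l < n + 2) :
    (genericPoly (n + 2) * kernelPoly n s).coeff (2 * l + 1) = 0 := by
  have hker : ((extendedMatrix n).adjugate * extendedMatrix n) (.inr s)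
      (.inl ⟨n + 1 - l, by omega⟩) = 0 := by
    simp [adjugate_mul]
  rw [mul_apply] at hker
  simp only [kernelPoly, Finset.mul_sum, finsetSum_coeff, mul_left_comm _ (C _), coeff_C_mul]
  convert hker using 2 with k
  rw [extendedMatrix, fromCols_apply_inl, oddCoeffMatrix_apply]
  congr 2
  dsimp only
  omega

theorem coeff_kernelPoly_rowDeg (s : Fin 2) (k : Fin (n + 2) ⊕ Fin 2) :
    (kernelPoly n s).coeff (rowDeg n k) = (extendedMatrix n).adjugate (.inr s) k := by
  simp only [kernelPoly, finsetSum_coeff, coeff_C_mul_X_pow, (rowDeg_injective n).eq_iff,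
    Finset.sum_ite_eq, Finset.mem_univ, if_true]

theorem natDegree_kernelPoly_le (s : Fin 2) : (kernelPoly n s).natDegree ≤ n + 3 :=
  natDegree_sum_le_of_forall_le _ _ fun k _ =>
    (natDegree_C_mul_X_pow_le _ _).trans (rowDeg_le n k)

theorem det_adjugate_submatrix_inr_eq :
    ((extendedMatrix n).adjugate.submatrix Sum.inr Sum.inr).det =
      ((extendedMatrix n).adjugate.submatrix Sum.inr (permQ2 n ∘ Sum.inr)).det := by
  have hodd (s : Fin 2) := X_pow_dvd_sub_comp_neg_X fun l hl =>
    coeff_genericPoly_mul_kernelPoly_odd n s (l := l) hl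
  have hcoeff := X_pow_dvd_iff.mp (X_pow_dvd_mul_comp_neg_X_sub
    (coeff_zero_genericPoly_ne_zero (by omega)) (hodd 0) (hodd 1)) (2 * n + 3) (by omega)
  rw [coeff_mul_comp_neg_X_sub _ _ n (natDegree_kernelPoly_le n 0) (natDegree_kernelPoly_le n 1)]
    at hcoeff
  have hdeg (s : Fin 2) (k : Fin (n + 2) ⊕ Fin 2) (d : ℕ) (hd : rowDeg n k = d) :
      (kernelPoly n s).coeff d = (extendedMatrix n).adjugate (.inr s) k := by
    rw [← hd, coeff_kernelPoly_rowDeg]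
  simp only [hdeg _ (.inl 1) n (by simp [rowDeg]), hdeg _ (.inr 0) (n + 1) rfl,
    hdeg _ (.inr 1) (n + 2) rfl, hdeg _ (.inl 0) (n + 3) (by simp [rowDeg])] at hcoeff
  have h2 : (2 : MvPolynomial (Fin (2 * (n + 2))) ℂ) * (-1) ^ n ≠ 0 :=
    mul_ne_zero two_ne_zero (pow_ne_zero _ (neg_ne_zero.mpr one_ne_zero))
  have hσ : permQ2 n (.inr 0) = .inl 1 ∧ permQ2 n (.inr 1) = .inl 0 := by
    simp [permQ2, Equiv.swap_apply_def]
  rw [det_fin_two, det_fin_two]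
  simp only [submatrix_apply, Function.comp_apply, hσ.1, hσ.2]
  linear_combination (mul_eq_zero.mp hcoeff).resolve_left h2

end OddCoeffMinors

open OddCoeffMinors in
theorem stmt_11 (g : ℕ) (hg : 2 ≤ g) : (Q1 g).det = (Q2 g).det := by
  obtain ⟨n, rfl⟩ := Nat.exists_eq_add_of_le' hg
  have hA : (extendedMatrix n).toCols₁ = oddCoeffMatrix n := toCols₁_fromCols _ _
  have hJ₁ := det_mul_det_submatrix_adjugate (extendedMatrix n)
    ((1 : Equiv.Perm (Fin (n + 2) ⊕ Fin 2)) ∘ Sum.inr)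
  have hJ₂ := det_mul_det_submatrix_adjugate (extendedMatrix n) (permQ2 n ∘ Sum.inr)
  rw [hA, det_fromCols_one_submatrix] at hJ₁ hJ₂
  simp only [map_one, Equiv.Perm.coe_one, Function.id_comp, Units.val_one, Int.cast_one, one_mul,
    oddCoeffMatrix_submatrix_inl, det_adjugate_submatrix_inr_eq] at hJ₁
  rw [oddCoeffMatrix_submatrix_permQ2, sign_permQ2, Units.val_one, Int.cast_one, one_mul] at hJ₂
  exact mul_right_cancel₀ (pow_ne_zero _ (det_extendedMatrix_ne_zero n)) (hJ₁.symm.trans hJ₂)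
end
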